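/- arXiv:1807.11140 — 5 statements merged into one kernel-verified Lean document; each statement's English description precedes it below -/
import Mathlib

section
/- Let A be a nonempty finite subset of ℝⁿ whose convex hull does not contain the origin. For every nonempty subset S ⊆ A, there exists an affinely independent subset S' ⊆ S such that the point of minimal norm in the convex hull of S equals the point of minimal norm in the convex hull of S'. -/
/-- `w` is a point of minimal norm in the set `s`. -/
def IsMinNormPoint {E : Type*} [NormedAddCommGroup E] (s : Set E) (w : E) : Prop :=
  w ∈ s ∧ ∀ x ∈ s, ‖w‖ ≤ ‖x‖

theorem tau_reduces_to_affinely_independent (n : ℕ)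
    (A : Finset (EuclideanSpace ℝ (Fin n))) (hA : A.Nonempty)
    (h0 : (0 : EuclideanSpace ℝ (Fin n)) ∉
      convexHull ℝ (A : Set (EuclideanSpace ℝ (Fin n))))
    (S : Finset (EuclideanSpace ℝ (Fin n))) (hSA : S ⊆ A) (hS : S.Nonempty)
    (w : EuclideanSpace ℝ (Fin n))
    (hw : IsMinNormPoint (convexHull ℝ (S : Set (EuclideanSpace ℝ (Fin n)))) w) :
    ∃ S' : Finset (EuclideanSpace ℝ (Fin n)), S' ⊆ S ∧ S'.Nonempty ∧
      AffineIndependent ℝ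
        (fun p : (S' : Set (EuclideanSpace ℝ (Fin n))) => (p : EuclideanSpace ℝ (Fin n))) ∧
      IsMinNormPoint (convexHull ℝ (S' : Set (EuclideanSpace ℝ (Fin n)))) w := by
  obtain ⟨hmem, hmin⟩ := hw
  rw [convexHull_eq_union] at hmem
  simp only [Set.mem_iUnion] at hmem
  obtain ⟨t, hts, hai, hwt⟩ := hmem
  have htS : t ⊆ S := by
    intro x hx
    exact_mod_cast hts hx
  have htne : t.Nonempty := by
    by_contra h
    rw [Finset.not_nonempty_iff_eq_empty] at h
    simp [h] at hwt
  refine ⟨t, htS, htne, hai, hwt, fun x hx => hmin x ?_⟩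
  exact convexHull_mono hts hx
end

section
/- Let A be a nonempty finite subset of ℝⁿ. Define A^B = {τ(S) : S ⊆ A, S nonempty} where τ(S) is the point of minimal norm in the convex hull of S. Then A^B = {τ(S) : S ⊆ A nonempty, S affinely independent, and #S ≤ n+1}. -/
theorem minimal_combinations_eq_affinely_independent_ones (n : ℕ)
    (A : Finset (EuclideanSpace ℝ (Fin n))) (hA : A.Nonempty) :
    {w : EuclideanSpace ℝ (Fin n) | ∃ S : Finset (EuclideanSpace ℝ (Fin n)),
        S ⊆ A ∧ S.Nonempty ∧
        IsMinNormPoint (convexHull ℝ (S : Set (EuclideanSpace ℝ (Fin n)))) w}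
    = {w : EuclideanSpace ℝ (Fin n) | ∃ S : Finset (EuclideanSpace ℝ (Fin n)),
        S ⊆ A ∧ S.Nonempty ∧
        AffineIndependent ℝ
          (fun p : (S : Set (EuclideanSpace ℝ (Fin n))) => (p : EuclideanSpace ℝ (Fin n))) ∧
        S.card ≤ n + 1 ∧
        IsMinNormPoint (convexHull ℝ (S : Set (EuclideanSpace ℝ (Fin n)))) w} := by
  ext w
  simp only [Set.mem_setOf_eq]
  constructor
  · rintro ⟨S, hSA, hSne, hw, hmin⟩
    -- Carathéodory
    rw [convexHull_eq_union] at hw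
    simp only [Set.mem_iUnion, exists_prop] at hw
    obtain ⟨T, hTS, hTai, hwT⟩ := hw
    have hTne : T.Nonempty := by
      rcases T.eq_empty_or_nonempty with h | h
      · simp [h] at hwT
      · exact h
    refine ⟨T, fun x hx => hSA (hTS hx), hTne, hTai, ?_, hwT, fun x hx => ?_⟩
    · have := hTai.card_le_finrank_succ
      have hr : Module.finrank ℝ (vectorSpan ℝ (Set.range ((↑) : T → EuclideanSpace ℝ (Fin n))))
          ≤ n := by
        have h1 : Module.finrank ℝ (vectorSpan ℝ (Set.range ((↑) : T → EuclideanSpace ℝ (Fin n))))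
            ≤ Module.finrank ℝ (EuclideanSpace ℝ (Fin n)) :=
          Submodule.finrank_le _
        simpa using h1
      have hc : Fintype.card T = T.card := Fintype.card_coe T
      omega
    · exact hmin x (convexHull_mono hTS hx)
  · rintro ⟨S, hSA, hSne, _, _, hmin⟩
    exact ⟨S, hSA, hSne, hmin⟩
end

section
/- Let S = {x₁, …, x_s} ⊂ ℝⁿ be a nonempty finite affinely independent set not containing the origin in its convex hull. Let σ(S) be the orthogonal projection of the origin onto the affine span of S (the unique point of minimal norm in Aff(S)). If the point τ(S) of minimal norm in the convex hull of S can be written as τ(S) = Σ λᵢ xᵢ with all λᵢ > 0 and Σ λᵢ = 1, then σ(S) lies in the convex hull of S (and hence σ(S) = τ(S)). -/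
open scoped RealInnerProductSpace

set_option maxHeartbeats 1000000 in
theorem sigma_mem_convexHull_of_interior_tau (n s : ℕ)
    (x : Fin s → EuclideanSpace ℝ (Fin n))
    (hx : AffineIndependent ℝ x)
    (h0 : (0 : EuclideanSpace ℝ (Fin n)) ∉ convexHull ℝ (Set.range x))
    (σ τ : EuclideanSpace ℝ (Fin n))
    (hσ : IsMinNormPoint (affineSpan ℝ (Set.range x) : Set (EuclideanSpace ℝ (Fin n))) σ)
    (hτ : IsMinNormPoint (convexHull ℝ (Set.range x)) τ)
    (lam : Fin s → ℝ) (hpos : ∀ i, 0 < lam i) (hsum : ∑ i, lam i = 1)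
    (hrep : τ = ∑ i, lam i • x i) :
    σ ∈ convexHull ℝ (Set.range x) ∧ σ = τ := by
  classical
  have hs0 : s ≠ 0 := by rintro rfl; simp at hsum
  have hne : Nonempty (Fin s) := ⟨⟨0, Nat.pos_of_ne_zero hs0⟩⟩
  have hKc : Convex ℝ (convexHull ℝ (Set.range x)) := convex_convexHull ℝ _
  have hτK : τ ∈ convexHull ℝ (Set.range x) := hτ.1
  have hτspan : τ ∈ affineSpan ℝ (Set.range x) :=
    (convexHull_subset_affineSpan _) hτK
  -- τ minimizes the distance to 0 over K, as an infimum
  haveI : Nonempty (convexHull ℝ (Set.range x)) := ⟨⟨τ, hτK⟩⟩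
  have hinf : ‖(0 : EuclideanSpace ℝ (Fin n)) - τ‖ = ⨅ w : convexHull ℝ (Set.range x), ‖(0 : EuclideanSpace ℝ (Fin n)) - w‖ := by
    refine le_antisymm ?_ ?_
    · refine le_ciInf fun w => ?_
      simpa using hτ.2 w w.2
    · exact ciInf_le ⟨0, fun _ ⟨_, h⟩ => h ▸ norm_nonneg _⟩ (⟨τ, hτK⟩ : convexHull ℝ (Set.range x))
  have hhull : ∀ w ∈ convexHull ℝ (Set.range x), ⟪(0 : EuclideanSpace ℝ (Fin n)) - τ, w - τ⟫ ≤ 0 :=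
    (norm_eq_iInf_iff_real_inner_le_zero hKc hτK).1 hinf
  -- key: the variational inequality extends to the affine span
  have key : ∀ y ∈ affineSpan ℝ (Set.range x), 0 ≤ ⟪τ, y - τ⟫ := by
    intro y hy
    obtain ⟨ν, hν1, hyrep⟩ := eq_affineCombination_of_mem_affineSpan_of_fintype hy
    have hyrep2 : y = ∑ i, ν i • x i := by
      rw [hyrep, Finset.affineCombination_eq_linear_combination _ x ν hν1]
    -- choose a small step size t
    set B : ℝ := Finset.univ.sup' Finset.univ_nonempty fun i => |ν i - lam i| with hBdef
    set δ : ℝ := Finset.univ.inf' Finset.univ_nonempty lam with hδdef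
    have hδpos : 0 < δ := by
      rw [hδdef]
      exact (Finset.lt_inf'_iff _).2 fun i _ => hpos i
    have hB0 : 0 ≤ B := le_trans (abs_nonneg _)
      (Finset.le_sup' (fun i => |ν i - lam i|) (Finset.mem_univ (Classical.arbitrary (Fin s))))
    set t : ℝ := δ / (B + δ) with htdef
    have hBδ : 0 < B + δ := by linarith
    have htpos : 0 < t := div_pos hδpos hBδ
    have ht1 : t ≤ 1 := by
      rw [htdef, div_le_one hBδ]; linarith
    -- the perturbed point
    set w : Fin s → ℝ := fun i => (1 - t) * lam i + t * ν i with hwdef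
    have hw0 : ∀ i, 0 ≤ w i := by
      intro i
      have h1 : δ ≤ lam i := Finset.inf'_le _ (Finset.mem_univ i)
      have h2 : |ν i - lam i| ≤ B := Finset.le_sup' (fun i => |ν i - lam i|) (Finset.mem_univ i)
      have h3 : -(B) ≤ ν i - lam i := (abs_le.1 h2).1
      have : w i = lam i + t * (ν i - lam i) := by rw [hwdef]; ring
      rw [this]
      have htB : t * B ≤ δ := by
        rw [htdef, div_mul_eq_mul_div, div_le_iff₀ hBδ]
        nlinarith
      nlinarith [mul_le_mul_of_nonneg_left h3 htpos.le]
    have hw1 : ∑ i, w i = 1 := by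
      simp only [hwdef, Finset.sum_add_distrib, ← Finset.mul_sum, hsum, hν1]
      ring
    have hzmem : (∑ i, w i • x i) ∈ convexHull ℝ (Set.range x) := by
      refine hKc.sum_mem (fun i _ => hw0 i) hw1 fun i _ => ?_
      exact subset_convexHull ℝ _ (Set.mem_range_self i)
    have hz : (∑ i, w i • x i) = τ + t • (y - τ) := by
      have : (∑ i, w i • x i) = (1 - t) • (∑ i, lam i • x i) + t • (∑ i, ν i • x i) := by
        rw [Finset.smul_sum, Finset.smul_sum, ← Finset.sum_add_distrib]
        refine Finset.sum_congr rfl fun i _ => ?_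
        rw [hwdef]; simp only [smul_smul, add_smul]
      rw [this, ← hrep, ← hyrep2]
      module
    have := hhull _ hzmem
    rw [hz] at this
    have h4 : τ + t • (y - τ) - τ = t • (y - τ) := by abel
    rw [h4, zero_sub, inner_neg_left, real_inner_smul_right] at this
    nlinarith
  -- τ is a min norm point on the affine span
  have hmin : ∀ y ∈ affineSpan ℝ (Set.range x), ‖τ‖ ≤ ‖y‖ := by
    intro y hy
    have h1 := key y hy
    have h2 : ‖τ + (y - τ)‖ ^ 2 = ‖τ‖ ^ 2 + 2 * ⟪τ, y - τ⟫ + ‖y - τ‖ ^ 2 :=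
      norm_add_sq_real τ (y - τ)
    have h3 : τ + (y - τ) = y := by abel
    rw [h3] at h2
    nlinarith [norm_nonneg y, norm_nonneg τ, norm_nonneg (y - τ)]
  have hστ : ‖σ‖ = ‖τ‖ := le_antisymm (hσ.2 τ hτspan) (hmin σ hσ.1)
  -- midpoint argument: σ = τ
  have hspanc : Convex ℝ (affineSpan ℝ (Set.range x) : Set (EuclideanSpace ℝ (Fin n))) :=
    (affineSpan ℝ (Set.range x)).convex
  have hmmem : (1/2 : ℝ) • σ + (1/2 : ℝ) • τ ∈ (affineSpan ℝ (Set.range x) : Set (EuclideanSpace ℝ (Fin n))) :=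
    hspanc hσ.1 hτspan (by norm_num) (by norm_num) (by norm_num)
  have hmle : ‖σ‖ ≤ ‖(1/2 : ℝ) • σ + (1/2 : ℝ) • τ‖ := hσ.2 _ hmmem
  have heq : σ = τ := by
    have h5 : (1/2 : ℝ) • σ + (1/2 : ℝ) • τ = (1/2 : ℝ) • (σ + τ) := by module
    rw [h5, norm_smul] at hmle
    simp only [norm_div, Real.norm_ofNat, norm_one] at hmle
    have h6 : ‖σ + τ‖ ^ 2 = ‖σ‖ ^ 2 + 2 * ⟪σ, τ⟫ + ‖τ‖ ^ 2 := norm_add_sq_real σ τ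
    have h7 : ‖σ - τ‖ ^ 2 = ‖σ‖ ^ 2 - 2 * ⟪σ, τ⟫ + ‖τ‖ ^ 2 := norm_sub_sq_real σ τ
    have hστ2 : ‖τ‖ ^ 2 = ‖σ‖ ^ 2 := by rw [hστ]
    have ha : 2 * ‖σ‖ ≤ ‖σ + τ‖ := by linarith
    have hb : 4 * ‖σ‖ ^ 2 ≤ ‖σ + τ‖ ^ 2 := by nlinarith [norm_nonneg σ]
    have hc : ‖σ - τ‖ ^ 2 ≤ 0 := by linarith
    have h8 : ‖σ - τ‖ = 0 := le_antisymm (by nlinarith [norm_nonneg (σ - τ)]) (norm_nonneg _)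
    exact sub_eq_zero.1 (norm_eq_zero.1 h8)
  exact ⟨heq ▸ hτK, heq⟩
end

section
/- Let S ⊂ ℝⁿ be a finite affinely independent set with origin not in its convex hull, and suppose the unique affine representation σ(S) = Σᵢ νᵢ xᵢ (Σνᵢ = 1) of the minimal-norm point of Aff(S) has some coefficient νᵢ ≤ 0. Then there exists a proper nonempty subset S' ⊊ S with τ(S') = τ(S); in particular, in the unique convex representation τ(S) = Σ λᵢ xᵢ some λᵢ equals 0. -/
set_option maxHeartbeats 1000000

open scoped RealInnerProductSpace

theorem tau_on_boundary_of_nonpositive_coeff (n s : ℕ)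
    (x : Fin s → EuclideanSpace ℝ (Fin n))
    (hx : AffineIndependent ℝ x)
    (h0 : (0 : EuclideanSpace ℝ (Fin n)) ∉ convexHull ℝ (Set.range x))
    (ν : Fin s → ℝ) (hνsum : ∑ i, ν i = 1)
    (σ : EuclideanSpace ℝ (Fin n)) (hσrep : σ = ∑ i, ν i • x i)
    (hσ : IsMinNormPoint (affineSpan ℝ (Set.range x) : Set (EuclideanSpace ℝ (Fin n))) σ)
    (hneg : ∃ i, ν i ≤ 0)
    (τ : EuclideanSpace ℝ (Fin n))
    (hτ : IsMinNormPoint (convexHull ℝ (Set.range x)) τ)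
    (lam : Fin s → ℝ) (hnn : ∀ i, 0 ≤ lam i) (hlsum : ∑ i, lam i = 1)
    (hrep : τ = ∑ i, lam i • x i) :
    (∃ i, lam i = 0) ∧
    ∃ S' : Set (EuclideanSpace ℝ (Fin n)), S' ⊂ Set.range x ∧ S'.Nonempty ∧
      IsMinNormPoint (convexHull ℝ S') τ := by
  classical
  have hsne : (Finset.univ : Finset (Fin s)).Nonempty := by
    by_contra h
    rw [Finset.not_nonempty_iff_eq_empty] at h
    rw [h, Finset.sum_empty] at hlsum
    norm_num at hlsum
  have hτspan : τ ∈ affineSpan ℝ (Set.range x) :=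
    convexHull_subset_affineSpan _ hτ.1
  -- Main claim: some lam is zero
  have key : ∃ j, lam j = 0 := by
    by_contra hc
    push_neg at hc
    have hpos : ∀ i, 0 < lam i := fun i => lt_of_le_of_ne (hnn i) (Ne.symm (hc i))
    -- Step 1: inner product nonneg
    have hin : ∀ y ∈ affineSpan ℝ (Set.range x), (0:ℝ) ≤ ⟪τ, y - τ⟫ := by
      intro y hy
      obtain ⟨μ, hμsum, hyrep⟩ := eq_affineCombination_of_mem_affineSpan_of_fintype hy
      rw [Finset.univ.affineCombination_eq_linear_combination x μ hμsum] at hyrep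
      by_contra hcon
      push_neg at hcon
      set c : ℝ := ⟪τ, y - τ⟫ with hc'
      set d : ℝ := ‖y - τ‖ ^ 2 with hd'
      have hd0 : 0 ≤ d := by positivity
      set ε : ℝ := Finset.univ.inf' hsne (fun i => lam i / (|μ i - lam i| + 1)) with hε'
      have hε0 : 0 < ε := by
        rw [hε']
        apply Finset.lt_inf'_iff hsne |>.2
        intro i _
        have : 0 < |μ i - lam i| + 1 := by positivity
        exact div_pos (hpos i) this
      set t : ℝ := min ε (-c / (d + 1)) with ht'
      have htpos : 0 < t := lt_min hε0 (div_pos (by linarith) (by linarith))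
      have htε : t ≤ ε := min_le_left _ _
      -- the perturbed point is in the convex hull
      have hz : τ + t • (y - τ) ∈ convexHull ℝ (Set.range x) := by
        have hw0 : ∀ i ∈ Finset.univ, (0:ℝ) ≤ lam i + t * (μ i - lam i) := by
          intro i _
          have h1 : t ≤ lam i / (|μ i - lam i| + 1) :=
            le_trans htε (Finset.inf'_le _ (Finset.mem_univ i))
          have h2 : t * (|μ i - lam i| + 1) ≤ lam i := by
            have habs : (0:ℝ) ≤ |μ i - lam i| := abs_nonneg _
            exact (le_div_iff₀ (by linarith)).1 h1
          have h3 : -(t * (μ i - lam i)) ≤ t * |μ i - lam i| := by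
            rw [← mul_neg]
            exact mul_le_mul_of_nonneg_left (neg_le_abs _) htpos.le
          nlinarith [abs_nonneg (μ i - lam i)]
        have hwsum : ∑ i, (lam i + t * (μ i - lam i)) = 1 := by
          rw [Finset.sum_add_distrib, ← Finset.mul_sum, Finset.sum_sub_distrib,
            hμsum, hlsum]
          ring
        have := Finset.centerMass_mem_convexHull (Finset.univ : Finset (Fin s))
          hw0 (by rw [hwsum]; norm_num)
          (fun i _ => Set.mem_range_self i (f := x))
        rw [Finset.centerMass_eq_of_sum_1 _ _ hwsum] at this
        convert this using 1
        rw [hrep, hyrep]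
        simp only [add_smul, mul_smul, sub_smul, smul_sub, Finset.sum_add_distrib,
          Finset.smul_sum, Finset.sum_sub_distrib]
      have hnorm := hτ.2 _ hz
      have hsq : ‖τ‖ ^ 2 ≤ ‖τ + t • (y - τ)‖ ^ 2 := by
        have h1 : (0:ℝ) ≤ ‖τ‖ := norm_nonneg _
        nlinarith [norm_nonneg (τ + t • (y - τ))]
      rw [norm_add_sq_real, real_inner_smul_right, norm_smul, Real.norm_eq_abs,
        abs_of_pos htpos] at hsq
      have hsq2 : 0 ≤ 2 * (t * c) + t ^ 2 * d := by
        rw [hc', hd']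
        nlinarith
      have htd : t * d ≤ -c := by
        have h1 : t ≤ -c / (d + 1) := min_le_right _ _
        have h2 : t * (d + 1) ≤ -c := by
          rw [← div_mul_cancel₀ (-c) (show d + 1 ≠ 0 by linarith)]
          exact mul_le_mul_of_nonneg_right h1 (by linarith)
        nlinarith
      nlinarith
    -- Step 2: inner product is zero, so τ is min-norm on the span
    have hin0 : ∀ y ∈ affineSpan ℝ (Set.range x), ⟪τ, y - τ⟫ = (0:ℝ) := by
      intro y hy
      have h1 := hin y hy
      have hy2 : (2:ℝ) • (τ -ᵥ y) +ᵥ y ∈ affineSpan ℝ (Set.range x) :=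
        AffineSubspace.smul_vsub_vadd_mem _ 2 hτspan hy hy
      have h2 := hin _ hy2
      have heq : ((2:ℝ) • (τ -ᵥ y) +ᵥ y) - τ = -(y - τ) := by
        simp only [vsub_eq_sub, vadd_eq_add]
        module
      rw [heq, inner_neg_right] at h2
      linarith
    -- Step 3: σ = τ
    have hστ : σ = τ := by
      have h1 := hin0 σ hσ.1
      have h2 : ‖σ‖ ^ 2 = ‖τ‖ ^ 2 + ‖σ - τ‖ ^ 2 := by
        have e : ‖τ + (σ - τ)‖ ^ 2 = ‖τ‖ ^ 2 + 2 * ⟪τ, σ - τ⟫ + ‖σ - τ‖ ^ 2 :=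
          norm_add_sq_real _ _
        rw [h1, show τ + (σ - τ) = σ by abel] at e
        linarith
      have h3 : ‖σ‖ ≤ ‖τ‖ := hσ.2 τ hτspan
      have h4 : ‖σ - τ‖ ^ 2 ≤ 0 := by nlinarith [norm_nonneg σ, norm_nonneg τ]
      have h5 : ‖σ - τ‖ = 0 := le_antisymm (by nlinarith [norm_nonneg (σ - τ)]) (norm_nonneg _)
      rw [norm_eq_zero, sub_eq_zero] at h5
      exact h5
    -- Step 4: lam = ν, contradiction
    have hlv : lam = ν := by
      apply (affineIndependent_iff_eq_of_fintype_affineCombination_eq ℝ x).1 hx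
        lam ν hlsum hνsum
      rw [Finset.univ.affineCombination_eq_linear_combination x lam hlsum,
        Finset.univ.affineCombination_eq_linear_combination x ν hνsum,
        ← hrep, ← hσrep, hστ]
    obtain ⟨i, hi⟩ := hneg
    exact absurd (hlv ▸ hi) (not_le.2 (hpos i))
  refine ⟨key, ?_⟩
  obtain ⟨j, hj⟩ := key
  obtain ⟨i, _, hi⟩ := Finset.exists_ne_zero_of_sum_ne_zero (hlsum.trans_ne one_ne_zero)
  have hij : i ≠ j := fun h => hi (h ▸ hj)
  refine ⟨Set.range x \ {x j}, ⟨Set.diff_subset, fun hsub => (hsub ⟨j, rfl⟩).2 rfl⟩,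
    ⟨x i, ⟨i, rfl⟩, fun h => hij (hx.injective h)⟩, ?_, ?_⟩
  · -- τ ∈ convexHull of the smaller set
    have hsum' : ∑ k ∈ Finset.univ.erase j, lam k = 1 := by
      rw [Finset.sum_erase _ hj, hlsum]
    have := Finset.centerMass_mem_convexHull (Finset.univ.erase j)
      (fun k _ => hnn k) (by rw [hsum']; norm_num)
      (fun k hk => show x k ∈ Set.range x \ {x j} from ⟨⟨k, rfl⟩, fun h => Finset.ne_of_mem_erase hk (hx.injective h)⟩)
    rw [Finset.centerMass_eq_of_sum_1 _ _ hsum'] at this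
    have heq : ∑ k ∈ Finset.univ.erase j, lam k • x k = τ := by
      rw [hrep, Finset.sum_erase]
      rw [hj, zero_smul]
    rwa [heq] at this
  · intro z hz
    exact hτ.2 z (convexHull_mono Set.diff_subset hz)
end

section
/- Let f_{λ,μ} = λ(x³ + y³ + z³) + μ·xyz with λ, μ real (not both zero). With the inner product making monomials orthogonal with ‖x^{i₁}y^{i₂}z^{i₃}‖² = i₁!i₂!i₃!/3!, the moment matrix m(f_{λ,μ}) = 2(H(f_{λ,μ}) − I) equals the zero matrix for all λ, μ. Hence there is a one-parameter family of cubic forms all mapping to 0 under the moment map. -/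
open MvPolynomial
open scoped Classical

/-- Squared norm weight of a monomial: `i₁!⋯i_n!/d!`. -/
noncomputable def bweight (n d : ℕ) (α : Fin n →₀ ℕ) : ℂ :=
  ((∏ i, Nat.factorial (α i) : ℕ) : ℂ) / (Nat.factorial d : ℂ)

/-- The Bombieri inner product on degree-`d` homogeneous polynomials, in which distinct
monomials are orthogonal and `‖x^α‖² = α!/d!`. -/
noncomputable def binner (n d : ℕ) (f g : MvPolynomial (Fin n) ℂ) : ℂ :=
  ∑ α ∈ f.support ∪ g.support,
    (starRingEnd ℂ) (coeff α f) * coeff α g * bweight n d α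

/-- The Hessian matrix `H(f)_{lk} = ⟨∂f/∂x_l, ∂f/∂x_k⟩ / (d‖f‖²)`; the derivatives are
paired with the inner product on degree-`(d-1)` polynomials. -/
noncomputable def hess (n d : ℕ) (f : MvPolynomial (Fin n) ℂ) (l k : Fin n) : ℂ :=
  binner n (d - 1) (pderiv l f) (pderiv k f) / ((d : ℂ) * binner n d f f)

/-- The moment matrix `m(f) = 2(H(f) - (d/n)·I)`. -/
noncomputable def mmt (n d : ℕ) (f : MvPolynomial (Fin n) ℂ) : Matrix (Fin n) (Fin n) ℂ :=
  fun l k => 2 * (hess n d f l k - if l = k then (d : ℂ) / (n : ℂ) else 0)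

namespace HessePencil

lemma binner_eq_sum (n d : ℕ) (f g : MvPolynomial (Fin n) ℂ) (S : Finset (Fin n →₀ ℕ))
    (hf : f.support ⊆ S) (hg : g.support ⊆ S) :
    binner n d f g = ∑ α ∈ S, (starRingEnd ℂ) (coeff α f) * coeff α g * bweight n d α := by
  unfold binner
  refine Finset.sum_subset (Finset.union_subset hf hg) ?_
  intro x _ hx
  simp only [Finset.mem_union, not_or, mem_support_iff, not_not] at hx
  simp [hx.1]

noncomputable def a0 : Fin 3 →₀ ℕ := Finsupp.single 0 3
noncomputable def a1 : Fin 3 →₀ ℕ := Finsupp.single 1 3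
noncomputable def a2 : Fin 3 →₀ ℕ := Finsupp.single 2 3
noncomputable def m111 : Fin 3 →₀ ℕ :=
  Finsupp.single 0 1 + Finsupp.single 1 1 + Finsupp.single 2 1
noncomputable def bb : Fin 3 → (Fin 3 →₀ ℕ) := fun l => Finsupp.single l 2
noncomputable def cc : Fin 3 → (Fin 3 →₀ ℕ) := fun l => m111 - Finsupp.single l 1

lemma vne {u v : Fin 3 →₀ ℕ} (i : Fin 3) (h : u i ≠ v i) : u ≠ v := fun e => h (by rw [e])

lemma m111_apply (i : Fin 3) : m111 i = 1 := by
  fin_cases i <;> simp [m111, Finsupp.single_apply]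

lemma bb_apply (l i : Fin 3) : bb l i = if l = i then 2 else 0 := by
  simp [bb, Finsupp.single_apply]

lemma cc_apply (l i : Fin 3) : cc l i = if l = i then 0 else 1 := by
  simp [cc, m111_apply, Finsupp.single_apply]
  split <;> simp

lemma bb_ne_cc (l k : Fin 3) : bb l ≠ cc k := by
  refine vne l ?_
  simp [bb_apply, cc_apply]
  split <;> simp

lemma bb_inj {l k : Fin 3} (h : l ≠ k) : bb l ≠ bb k := by
  refine vne l ?_
  simp [bb_apply, h, Ne.symm h]

lemma cc_inj {l k : Fin 3} (h : l ≠ k) : cc l ≠ cc k := by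
  refine vne l ?_
  simp [cc_apply, h, Ne.symm h]

lemma supp2 (p q : Fin 3 →₀ ℕ) (a b : ℂ) :
    (monomial p a + monomial q b : MvPolynomial (Fin 3) ℂ).support ⊆ {p, q} := by
  intro α hα
  rw [mem_support_iff] at hα
  by_contra hmem
  simp only [Finset.mem_insert, Finset.mem_singleton, not_or] at hmem
  simp [coeff_add, coeff_monomial, hmem.1, hmem.2, Ne.symm hmem.1, Ne.symm hmem.2] at hα

lemma supp4 (p q r s : Fin 3 →₀ ℕ) (a b c e : ℂ) :
    (monomial p a + monomial q b + monomial r c + monomial s e :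
      MvPolynomial (Fin 3) ℂ).support ⊆ {p, q, r, s} := by
  intro α hα
  rw [mem_support_iff] at hα
  by_contra hmem
  simp only [Finset.mem_insert, Finset.mem_singleton, not_or] at hmem
  obtain ⟨h1, h2, h3, h4⟩ := hmem
  simp [coeff_add, coeff_monomial, Ne.symm h1, Ne.symm h2, Ne.symm h3, Ne.symm h4] at hα

lemma f_eq (lam mu : ℂ) :
    (C lam * (X 0 ^ 3 + X 1 ^ 3 + X 2 ^ 3) + C mu * (X 0 * X 1 * X 2) : MvPolynomial (Fin 3) ℂ)
    = monomial a0 lam + monomial a1 lam + monomial a2 lam + monomial m111 mu := by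
  simp [a0, a1, a2, m111, X, monomial_pow, monomial_mul, C_mul_monomial, mul_add,
    Finsupp.smul_single]

lemma single_sub (j : Fin 3) :
    (Finsupp.single j 3 : Fin 3 →₀ ℕ) - Finsupp.single j 1 = Finsupp.single j 2 := by
  ext i
  simp [Finsupp.tsub_apply, Finsupp.single_apply]
  split <;> simp

lemma pderiv_f (lam mu : ℂ) (l : Fin 3) :
    pderiv l (monomial a0 lam + monomial a1 lam + monomial a2 lam + monomial m111 mu :
      MvPolynomial (Fin 3) ℂ) = monomial (bb l) (3 * lam) + monomial (cc l) mu := by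
  fin_cases l <;>
    simp [a0, a1, a2, pderiv_monomial, Finsupp.single_apply, m111_apply, bb, cc, m111,
      single_sub, mul_comm]

lemma a_apply (j i : Fin 3) : (Finsupp.single j 3 : Fin 3 →₀ ℕ) i = if j = i then 3 else 0 :=
  Finsupp.single_apply

lemma a_ne_m (j : Fin 3) : (Finsupp.single j 3 : Fin 3 →₀ ℕ) ≠ m111 := by
  refine vne j ?_
  simp [a_apply, m111_apply]

lemma a_inj {l k : Fin 3} (h : l ≠ k) :
    (Finsupp.single l 3 : Fin 3 →₀ ℕ) ≠ Finsupp.single k 3 := by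
  refine vne l ?_
  simp [a_apply, h, Ne.symm h]

lemma bwa (j : Fin 3) : bweight 3 3 (Finsupp.single j 3) = 1 := by
  unfold bweight
  rw [Fin.prod_univ_three]
  fin_cases j <;> simp [Finsupp.single_apply] <;> norm_num [Nat.factorial]

lemma bwm : bweight 3 3 m111 = 1 / 6 := by
  unfold bweight
  rw [Fin.prod_univ_three]
  simp [m111_apply]
  norm_num [Nat.factorial]

lemma bwb (l : Fin 3) : bweight 3 2 (bb l) = 1 := by
  unfold bweight
  rw [Fin.prod_univ_three]
  fin_cases l <;> simp [bb_apply]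

lemma bwc (l : Fin 3) : bweight 3 2 (cc l) = 1 / 2 := by
  unfold bweight
  rw [Fin.prod_univ_three]
  fin_cases l <;> simp [cc_apply]

lemma bwa0 : bweight 3 3 a0 = 1 := bwa 0
lemma bwa1 : bweight 3 3 a1 = 1 := bwa 1
lemma bwa2 : bweight 3 3 a2 = 1 := bwa 2

lemma hff (lam mu : ℝ) :
    binner 3 3 (monomial a0 (lam:ℂ) + monomial a1 (lam:ℂ) + monomial a2 (lam:ℂ)
      + monomial m111 (mu:ℂ)) (monomial a0 (lam:ℂ) + monomial a1 (lam:ℂ) + monomial a2 (lam:ℂ)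
      + monomial m111 (mu:ℂ)) = ((3 * lam ^ 2 + mu ^ 2 / 6 : ℝ) : ℂ) := by
  have h01 : a0 ≠ a1 := a_inj (by decide)
  have h02 : a0 ≠ a2 := a_inj (by decide)
  have h12 : a1 ≠ a2 := a_inj (by decide)
  have h0m : a0 ≠ m111 := a_ne_m 0
  have h1m : a1 ≠ m111 := a_ne_m 1
  have h2m : a2 ≠ m111 := a_ne_m 2
  rw [binner_eq_sum 3 3 _ _ {a0, a1, a2, m111} (supp4 _ _ _ _ _ _ _ _) (supp4 _ _ _ _ _ _ _ _)]
  rw [Finset.sum_insert (by simp [h01, h02, h0m]),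
      Finset.sum_insert (by simp [h12, h1m]),
      Finset.sum_insert (by simp [h2m]), Finset.sum_singleton]
  simp [coeff_add, coeff_monomial, h01, h02, h12, h0m, h1m, h2m,
    Ne.symm h01, Ne.symm h02, Ne.symm h12, Ne.symm h0m, Ne.symm h1m, Ne.symm h2m,
    bwa0, bwa1, bwa2, bwm, Complex.conj_ofReal]
  push_cast
  ring

lemma hdiag (lam mu : ℝ) (l : Fin 3) :
    binner 3 2 (monomial (bb l) (3 * (lam:ℂ)) + monomial (cc l) (mu:ℂ))
      (monomial (bb l) (3 * (lam:ℂ)) + monomial (cc l) (mu:ℂ))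
      = ((9 * lam ^ 2 + mu ^ 2 / 2 : ℝ) : ℂ) := by
  have hbc : bb l ≠ cc l := bb_ne_cc l l
  rw [binner_eq_sum 3 2 _ _ {bb l, cc l} (supp2 _ _ _ _) (supp2 _ _ _ _)]
  rw [Finset.sum_insert (by simp [hbc]), Finset.sum_singleton]
  simp [coeff_add, coeff_monomial, hbc, Ne.symm hbc, bwb, bwc, Complex.conj_ofReal, map_ofNat]
  push_cast
  ring

lemma hoff (lam mu : ℝ) {l k : Fin 3} (hlk : l ≠ k) :
    binner 3 2 (monomial (bb l) (3 * (lam:ℂ)) + monomial (cc l) (mu:ℂ))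
      (monomial (bb k) (3 * (lam:ℂ)) + monomial (cc k) (mu:ℂ)) = 0 := by
  have h1 : bb l ≠ cc l := bb_ne_cc l l
  have h2 : bb k ≠ cc k := bb_ne_cc k k
  have h3 : bb l ≠ bb k := bb_inj hlk
  have h4 : cc l ≠ cc k := cc_inj hlk
  have h5 : bb l ≠ cc k := bb_ne_cc l k
  have h6 : bb k ≠ cc l := bb_ne_cc k l
  rw [binner_eq_sum 3 2 _ _ {bb l, cc l, bb k, cc k} ?_ ?_]
  · rw [Finset.sum_insert (by simp [h1, h3, h5]),
        Finset.sum_insert (by simp [Ne.symm h6, h4]),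
        Finset.sum_insert (by simp [h2]), Finset.sum_singleton]
    simp [coeff_add, coeff_monomial, h1, h2, h3, h4, h5, h6,
      Ne.symm h1, Ne.symm h2, Ne.symm h3, Ne.symm h4, Ne.symm h5, Ne.symm h6]
  · exact (supp2 _ _ _ _).trans (by intro x hx; simp at hx ⊢; tauto)
  · exact (supp2 _ _ _ _).trans (by intro x hx; simp at hx ⊢; tauto)

end HessePencil


open HessePencil in
theorem hesse_pencil_moment_zero (lam mu : ℝ) (h : ¬(lam = 0 ∧ mu = 0)) :
    mmt 3 3 (C (lam : ℂ) * (X 0 ^ 3 + X 1 ^ 3 + X 2 ^ 3) +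
      C (mu : ℂ) * (X 0 * X 1 * X 2) : MvPolynomial (Fin 3) ℂ) = 0 := by
  have hpos : (0:ℝ) < 3 * lam ^ 2 + mu ^ 2 / 6 := by
    rcases not_and_or.mp h with h' | h' <;> positivity
  rw [f_eq]
  funext l k
  show (2 : ℂ) * (hess 3 3 _ l k - if l = k then (3:ℂ)/(3:ℂ) else 0) = 0
  unfold hess
  rw [pderiv_f, pderiv_f, hff]
  by_cases hlk : l = k
  · subst hlk
    rw [show ((3:ℕ) - 1) = 2 from rfl, hdiag]
    have hne : ((3 * lam ^ 2 + mu ^ 2 / 6 : ℝ) : ℂ) ≠ 0 := Complex.ofReal_ne_zero.mpr hpos.ne'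
    have h9 : ((9 * lam ^ 2 + mu ^ 2 / 2 : ℝ) : ℂ)
        = ((3:ℕ):ℂ) * ((3 * lam ^ 2 + mu ^ 2 / 6 : ℝ) : ℂ) := by push_cast; ring
    rw [h9, div_self (mul_ne_zero (by norm_num) hne)]
    norm_num
  · rw [show ((3:ℕ) - 1) = 2 from rfl, hoff lam mu hlk]
    simp [hlk]
end
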